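/- Let t ≤ 0, s + t ≤ 0, and r + s + t ≤ -1, with strict inequality in the first two whenever the third is an equality. Then there is a constant C such that for every measurable f: (0,∞) → ℝ, ∫_1^∞ x^r · sup_{ξ ≥ x} ( ξ^s ∫_ξ^∞ y^t |f(y)| dy ) dx ≤ C ∫_0^∞ |f(x)| dx. -/

import Mathlib

/-
Put `σ = max s 0`. For `0 < x ≤ ξ ≤ y` one has
`ξ ^ s * y ^ t ≤ x ^ (s - σ) * y ^ (t + σ)`, so the supremum over `ξ ≥ x` is dominated by
`x ^ (s - σ) ∫_x^∞ y ^ (t + σ) |f y| dy`. By Tonelli the left-hand side is then at most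
`∫_1^∞ (∫_1^y x ^ (r + s - σ) dx) y ^ (t + σ) |f y| dy`, and the hypotheses say precisely
that `∫_1^y x ^ (r + s - σ) dx = O(y ^ (-(t + σ)))`: either `t + σ < 0` and
`r + s - σ ≤ -(t + σ) - 1`, or `t + σ = 0` and `r + s - σ < -1`.
-/

open MeasureTheory Set Real
open scoped ENNReal

lemma lintegral_Ioo_one_rpow {a y : ℝ} (ha : a ≠ -1) (hy : 1 ≤ y) :
    ∫⁻ x in Ioo 1 y, ENNReal.ofReal (x ^ a) = ENNReal.ofReal ((y ^ (a + 1) - 1) / (a + 1)) := by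
  have h0 : (0 : ℝ) ∉ uIcc 1 y := by
    rw [uIcc_of_le hy]
    exact fun h => absurd h.1 (by norm_num)
  have hint : IntegrableOn (fun x : ℝ => x ^ a) (Ioo 1 y) :=
    (intervalIntegral.intervalIntegrable_rpow (Or.inr h0)).1.mono_set Ioo_subset_Ioc_self
  rw [← ofReal_integral_eq_lintegral_ofReal hint, ← integral_Ioc_eq_integral_Ioo,
    ← intervalIntegral.integral_of_le hy, integral_rpow (Or.inr ⟨ha, h0⟩), one_rpow]
  exact (ae_restrict_iff' measurableSet_Ioo).2
    (.of_forall fun x hx => rpow_nonneg (by linarith [hx.1]) a)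

lemma exists_lintegral_Ioo_one_rpow_le {ρ τ : ℝ} (hτ : τ ≤ 0) (hρτ : ρ + τ ≤ -1)
    (hτρ : τ = 0 → ρ < -1) :
    ∃ K : ℝ, 0 < K ∧ ∀ y : ℝ, 1 ≤ y →
      ∫⁻ x in Ioo 1 y, ENNReal.ofReal (x ^ ρ) ≤ ENNReal.ofReal (K * y ^ (-τ)) := by
  rcases hτ.lt_or_eq with hτ | rfl
  · refine ⟨(-τ)⁻¹, by simpa using hτ, fun y hy => ?_⟩
    calc ∫⁻ x in Ioo 1 y, ENNReal.ofReal (x ^ ρ)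
        ≤ ∫⁻ x in Ioo 1 y, ENNReal.ofReal (x ^ (-τ - 1)) :=
          setLIntegral_mono' measurableSet_Ioo fun x hx =>
            ENNReal.ofReal_le_ofReal (rpow_le_rpow_of_exponent_le hx.1.le (by linarith))
      _ = ENNReal.ofReal ((-τ)⁻¹ * (y ^ (-τ) - 1)) := by
          rw [lintegral_Ioo_one_rpow (by linarith) hy, sub_add_cancel, div_eq_inv_mul]
      _ ≤ ENNReal.ofReal ((-τ)⁻¹ * y ^ (-τ)) := by
          gcongr
          · simpa using hτ.le
          · linarith
  · have hρ : 0 < -(ρ + 1) := by linarith [hτρ rfl]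
    refine ⟨(-(ρ + 1))⁻¹, inv_pos.2 hρ, fun y hy => ?_⟩
    rw [lintegral_Ioo_one_rpow (by linarith) hy, neg_zero, rpow_zero, mul_one, inv_eq_one_div,
      ← neg_div_neg_eq, neg_sub]
    gcongr
    linarith [rpow_nonneg (zero_le_one.trans hy) (ρ + 1)]

lemma lintegral_Ioi_mul_lintegral_Ioi {μ : Measure ℝ} [SFinite μ] (a : ℝ)
    {w h : ℝ → ℝ≥0∞} (hw : Measurable w) (hh : Measurable h) :
    ∫⁻ x in Ioi a, w x * ∫⁻ y in Ioi x, h y ∂μ ∂μ =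
      ∫⁻ y in Ioi a, (∫⁻ x in Ioo a y, w x ∂μ) * h y ∂μ := by
  have hind : ∀ x y, w x * (Ioi x).indicator h y = (Iio y).indicator w x * h y := by
    intro x y
    by_cases hxy : x < y <;> simp [hxy]
  have hmeas : Measurable (Function.uncurry fun x y => w x * (Ioi x).indicator h y) := by
    simp only [indicator_apply, mem_Ioi]
    exact (hw.comp measurable_fst).mul <|
      Measurable.ite (measurableSet_lt measurable_fst measurable_snd)
        (hh.comp measurable_snd) measurable_const
  calc ∫⁻ x in Ioi a, w x * ∫⁻ y in Ioi x, h y ∂μ ∂μ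
      = ∫⁻ x in Ioi a, ∫⁻ y in Ioi a, w x * (Ioi x).indicator h y ∂μ ∂μ := by
        refine setLIntegral_congr_fun measurableSet_Ioi fun x (hx : a < x) => ?_
        rw [lintegral_const_mul _ (hh.indicator measurableSet_Ioi),
          lintegral_indicator measurableSet_Ioi, Measure.restrict_restrict measurableSet_Ioi,
          inter_eq_left.2 (Ioi_subset_Ioi hx.le)]
    _ = ∫⁻ y in Ioi a, ∫⁻ x in Ioi a, (Iio y).indicator w x * h y ∂μ ∂μ := by
        simp_rw [lintegral_lintegral_swap hmeas.aemeasurable, hind]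
    _ = ∫⁻ y in Ioi a, (∫⁻ x in Ioo a y, w x ∂μ) * h y ∂μ := by
        simp_rw [lintegral_mul_const _ (hw.indicator measurableSet_Iio),
          lintegral_indicator measurableSet_Iio, Measure.restrict_restrict measurableSet_Iio,
          Iio_inter_Ioi]

theorem exists_lintegral_rpow_mul_lintegral_Ioi_le {ρ τ : ℝ} (hτ : τ ≤ 0)
    (hρτ : ρ + τ ≤ -1) (hτρ : τ = 0 → ρ < -1) :
    ∃ C : ℝ, 0 < C ∧ ∀ h : ℝ → ℝ≥0∞, Measurable h →
      ∫⁻ x in Ioi 1, ENNReal.ofReal (x ^ ρ) * ∫⁻ y in Ioi x, ENNReal.ofReal (y ^ τ) * h y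
        ≤ ENNReal.ofReal C * ∫⁻ y in Ioi 1, h y := by
  obtain ⟨K, hK, hkernel⟩ := exists_lintegral_Ioo_one_rpow_le hτ hρτ hτρ
  refine ⟨K, hK, fun h hh => ?_⟩
  rw [lintegral_Ioi_mul_lintegral_Ioi 1 (by fun_prop) (by fun_prop),
    ← lintegral_const_mul' _ _ ENNReal.ofReal_ne_top]
  refine setLIntegral_mono' measurableSet_Ioi fun y (hy : 1 < y) => ?_
  have hy0 : 0 < y := zero_lt_one.trans hy
  calc (∫⁻ x in Ioo 1 y, ENNReal.ofReal (x ^ ρ)) * (ENNReal.ofReal (y ^ τ) * h y)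
      ≤ ENNReal.ofReal (K * y ^ (-τ)) * (ENNReal.ofReal (y ^ τ) * h y) := by
        gcongr
        exact hkernel y hy.le
    _ = ENNReal.ofReal K * h y := by
        rw [← mul_assoc, ← ENNReal.ofReal_mul (by positivity), mul_assoc, ← rpow_add hy0,
          neg_add_cancel, rpow_zero, mul_one]

lemma rpow_mul_rpow_le {x ξ y : ℝ} (hx : 0 < x) (hxξ : x ≤ ξ) (hξy : ξ ≤ y) (s t : ℝ) :
    ξ ^ s * y ^ t ≤ x ^ (s - max s 0) * y ^ (t + max s 0) := by
  have hy : 0 < y := by linarith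
  rcases le_total s 0 with hs | hs
  · rw [max_eq_right hs, sub_zero, add_zero]
    exact mul_le_mul_of_nonneg_right (rpow_le_rpow_of_nonpos hx hxξ hs) (by positivity)
  · rw [max_eq_left hs, sub_self, rpow_zero, one_mul, rpow_add hy, mul_comm (y ^ t)]
    exact mul_le_mul_of_nonneg_right (rpow_le_rpow (by linarith) hξy hs) (by positivity)

lemma iSup_rpow_mul_lintegral_Ioi_le {x : ℝ} (hx : 0 < x) (s t : ℝ) (h : ℝ → ℝ≥0∞) :
    ⨆ ξ ∈ Ici x, ENNReal.ofReal (ξ ^ s) * ∫⁻ y in Ioi ξ, ENNReal.ofReal (y ^ t) * h y ≤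
      ENNReal.ofReal (x ^ (s - max s 0)) *
        ∫⁻ y in Ioi x, ENNReal.ofReal (y ^ (t + max s 0)) * h y := by
  refine iSup₂_le fun ξ (hξ : x ≤ ξ) => ?_
  simp_rw [← lintegral_const_mul' _ _ ENNReal.ofReal_ne_top, ← mul_assoc]
  calc ∫⁻ y in Ioi ξ, ENNReal.ofReal (ξ ^ s) * ENNReal.ofReal (y ^ t) * h y
      ≤ ∫⁻ y in Ioi ξ, ENNReal.ofReal (x ^ (s - max s 0)) *
          ENNReal.ofReal (y ^ (t + max s 0)) * h y := by
        refine setLIntegral_mono' measurableSet_Ioi fun y (hy : ξ < y) => ?_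
        rw [← ENNReal.ofReal_mul (rpow_nonneg (hx.le.trans hξ) s),
          ← ENNReal.ofReal_mul (rpow_nonneg hx.le _)]
        gcongr ENNReal.ofReal ?_ * _
        exact rpow_mul_rpow_le hx hξ hy.le s t
    _ ≤ _ := lintegral_mono_set (Ioi_subset_Ioi hξ)

theorem stmt6 (r s t : ℝ) (ht : t ≤ 0) (hst : s + t ≤ 0)
    (hrst : r + s + t ≤ -1)
    (hstrict : r + s + t = -1 → t < 0 ∧ s + t < 0) :
    ∃ C : ℝ, 0 < C ∧ ∀ f : ℝ → ℝ, Measurable f →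
      ∫⁻ x in Set.Ioi (1 : ℝ),
          ENNReal.ofReal (x ^ r) *
            ⨆ ξ ∈ Set.Ici x,
              ENNReal.ofReal (ξ ^ s) *
                ∫⁻ y in Set.Ioi ξ, ENNReal.ofReal (y ^ t * |f y|)
        ≤ ENNReal.ofReal C * ∫⁻ x in Set.Ioi (0 : ℝ), ENNReal.ofReal |f x| := by
  have hτ : t + max s 0 = max (s + t) t := by rw [← max_add_add_left, add_zero, add_comm]
  obtain ⟨C, hC, hardy⟩ := exists_lintegral_rpow_mul_lintegral_Ioi_le (ρ := r + s - max s 0)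
    (hτ ▸ max_le hst ht) (by linarith) fun hτ0 => by
      have hne : r + s + t ≠ -1 := fun heq =>
        (hτ ▸ hτ0).not_lt (max_lt_iff.2 (hstrict heq).symm)
      linarith [hrst.lt_of_ne hne]
  refine ⟨C, hC, fun f hf => ?_⟩
  simp_rw [ENNReal.ofReal_mul' (abs_nonneg _)]
  calc _ ≤ ∫⁻ x in Ioi 1, ENNReal.ofReal (x ^ (r + s - max s 0)) *
          ∫⁻ y in Ioi x, ENNReal.ofReal (y ^ (t + max s 0)) * ENNReal.ofReal |f y| := by
        refine setLIntegral_mono' measurableSet_Ioi fun x (hx : 1 < x) => ?_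
        have hx0 : 0 < x := zero_lt_one.trans hx
        grw [iSup_rpow_mul_lintegral_Ioi_le hx0, ← mul_assoc,
          ← ENNReal.ofReal_mul (by positivity), ← rpow_add hx0, add_sub_assoc]
    _ ≤ ENNReal.ofReal C * ∫⁻ y in Ioi 1, ENNReal.ofReal |f y| := hardy _ (by fun_prop)
    _ ≤ _ := by
        gcongr
        exact zero_le_one
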